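/- Let g : ℝ^n → ℝ ∪ {+∞} be a proper convex function, let u, x̂ ∈ ℝ^n and v ∈ ℝ^n. If v ∈ ∂g(u) and v belongs to the topological interior of ∂g(x̂), then u = x̂. (This is the key fact underlying variable screening: a subgradient attained at an interior point of the subdifferential at x̂ can only occur at x̂ itself.) -/

import Mathlib

/-!
The subdifferential is a monotone operator: adding the subgradient inequalities at `u` and at `x̂`
gives `⟨v − w, u − x̂⟩ ≥ 0` for `v ∈ ∂g(u)`, `w ∈ ∂g(x̂)`. If `v` is interior to `∂g(x̂)`, then
`w = v + t (u − x̂) ∈ ∂g(x̂)` for some `t > 0`, and monotonicity reads `−t ‖u − x̂‖² ≥ 0`.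
-/

open scoped BigOperators

noncomputable section

/-- A function to `EReal` is proper if it is somewhere finite and nowhere `-∞`. -/
def ERealProper {E : Type*} (g : E → EReal) : Prop :=
  (∃ x, g x ≠ ⊤) ∧ ∀ x, g x ≠ ⊥

/-- Convexity for an `EReal`-valued function on a real vector space. -/
def ERealConvexOn {E : Type*} [AddCommMonoid E] [Module ℝ E] (g : E → EReal) : Prop :=
  ∀ x y : E, ∀ a b : ℝ, 0 ≤ a → 0 ≤ b → a + b = 1 →
    g (a • x + b • y) ≤ (a : EReal) * g x + (b : EReal) * g y

/-- The subdifferential `∂g(u) = {v : ∀ y, g(y) ≥ g(u) + ⟨v, y − u⟩}`. -/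
def subdiff {n : ℕ} (g : (Fin n → ℝ) → EReal) (u : Fin n → ℝ) : Set (Fin n → ℝ) :=
  {v | ∀ y, g u + ((∑ l, v l * (y l - u l) : ℝ) : EReal) ≤ g y}
open Filter Topology

section Subdiff

variable {n : ℕ} {g : (Fin n → ℝ) → EReal} {u x v w : Fin n → ℝ}

lemma mem_subdiff_iff : v ∈ subdiff g u ↔ ∀ y, g u + ((v ⬝ᵥ (y - u) : ℝ) : EReal) ≤ g y :=
  Iff.rfl

/-- If `g u = ⊤`, a subgradient at `u` would force `g ≡ ⊤`. -/
lemma ne_top_of_mem_subdiff (hg : ∃ y, g y ≠ ⊤) (hv : v ∈ subdiff g u) : g u ≠ ⊤ := by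
  obtain ⟨y, hy⟩ := hg
  intro hu
  have hvy := hv y
  rw [hu, EReal.top_add_coe, top_le_iff] at hvy
  exact hy hvy

lemma exists_real_eq_of_mem_subdiff (hg : ERealProper g) (hv : v ∈ subdiff g u) :
    ∃ a : ℝ, g u = a :=
  ⟨(g u).toReal, (EReal.coe_toReal (ne_top_of_mem_subdiff hg.1 hv) (hg.2 u)).symm⟩

lemma subdiff_monotone (hg : ERealProper g) (hv : v ∈ subdiff g u) (hw : w ∈ subdiff g x) :
    0 ≤ (v - w) ⬝ᵥ (u - x) := by
  obtain ⟨a, ha⟩ := exists_real_eq_of_mem_subdiff hg hv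
  obtain ⟨b, hb⟩ := exists_real_eq_of_mem_subdiff hg hw
  have hvx := mem_subdiff_iff.1 hv x
  have hwu := mem_subdiff_iff.1 hw u
  rw [ha, hb, ← EReal.coe_add, EReal.coe_le_coe_iff] at hvx hwu
  have hsplit : (v - w) ⬝ᵥ (u - x) = -(v ⬝ᵥ (x - u)) - w ⬝ᵥ (u - x) := by
    rw [sub_dotProduct, ← neg_sub x u, dotProduct_neg]
  linarith

end Subdiff

lemma exists_pos_add_smul_mem_of_mem_interior {E : Type*} [TopologicalSpace E] [AddCommGroup E]
    [Module ℝ E] [ContinuousAdd E] [ContinuousSMul ℝ E] {s : Set E} {v : E}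
    (hv : v ∈ interior s) (d : E) : ∃ t : ℝ, 0 < t ∧ v + t • d ∈ s := by
  have hcont : Tendsto (fun t : ℝ => v + t • d) (𝓝[>] 0) (𝓝 v) :=
    ((continuous_const.add (continuous_id.smul continuous_const)).tendsto' 0 v
      (by simp)).mono_left nhdsWithin_le_nhds
  exact ((hcont.eventually (mem_interior_iff_mem_nhds.1 hv)).and self_mem_nhdsWithin).exists.imp
    fun _ h => ⟨h.2, h.1⟩

theorem eq_of_mem_interior_subdiff_general
    {n : ℕ} (g : (Fin n → ℝ) → EReal)
    (hproper : ERealProper g)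
    (u xhat v : Fin n → ℝ)
    (hv : v ∈ subdiff g u)
    (hint : v ∈ interior (subdiff g xhat)) :
    u = xhat := by
  obtain ⟨t, ht, hw⟩ := exists_pos_add_smul_mem_of_mem_interior hint (u - xhat)
  have hmono := subdiff_monotone hproper hv hw
  rw [sub_add_cancel_left, neg_dotProduct, smul_dotProduct, smul_eq_mul, neg_nonneg] at hmono
  have hsq : (u - xhat) ⬝ᵥ (u - xhat) = 0 :=
    le_antisymm (nonpos_of_mul_nonpos_right hmono ht)
      (Finset.sum_nonneg fun l _ => mul_self_nonneg _)
  exact sub_eq_zero.1 (dotProduct_self_eq_zero.1 hsq)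

/-- If `v ∈ ∂g(u)` and `v` lies in the topological interior of `∂g(x̂)`, then `u = x̂`. -/
theorem eq_of_mem_interior_subdiff
    {n : ℕ} (g : (Fin n → ℝ) → EReal)
    (hproper : ERealProper g) (hconv : ERealConvexOn g)
    (u xhat v : Fin n → ℝ)
    (hv : v ∈ subdiff g u)
    (hint : v ∈ interior (subdiff g xhat)) :
    u = xhat :=
  eq_of_mem_interior_subdiff_general g hproper u xhat v hv hint
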